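/- Let d ≥ 1, m ≥ 2, and K ∈ ℕ be fixed, and let J be an arbitrary real-valued functional on functions ℝ^d → ℝ. For parameters θ = ((v_k, w_k, b_k)_{k=1}^K, c) with v_k ∈ ℝ, w_k ∈ ℝ^d, b_k ∈ ℝ and c a polynomial of total degree strictly less than m, let f_θ(x) = Σ_{k=1}^K v_k ρ_m(⟨w_k, x⟩ − b_k) + c(x). Suppose θ* is a global minimizer of the weight-decay objective θ ↦ J(f_θ) + (1/2) Σ_{k=1}^K (|v_k|² + ‖w_k‖₂^{2m−2}). Then: (i) |v*_k| = ‖w*_k‖₂^{m−1} for every k, so that the weight-decay regularizer equals the path-norm regularizer Σ_{k=1}^K |v*_k| ‖w*_k‖₂^{m−1} at θ*; and (ii) θ* is also a global minimizer of the path-norm objective θ ↦ J(f_θ) + Σ_{k=1}^K |v_k| ‖w_k‖₂^{m−1}. -/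

import Mathlib

/-!
Rescaling a neuron by `(v, w, b) ↦ (v / λ ^ (m - 1), λ • w, λ * b)` with `λ > 0` changes
neither the network, by the `(m - 1)`-homogeneity of `ρ_m`, nor `|v| ‖w‖ ^ (m - 1)`.
Choosing `λ` so that `|v| = ‖w‖ ^ (m - 1)` makes the weight-decay term of the neuron equal
to its path-norm term; neurons with `w = 0` are constants and move into the polynomial part.
So every network is realized with weight decay equal to its path norm, while by AM-GM weight
decay always dominates path norm, with equality exactly at balanced neurons.
-/

open scoped InnerProductSpace BigOperators

noncomputable def truncPow (m : ℕ) (t : ℝ) : ℝ :=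
  (max 0 t) ^ (m - 1) / (Nat.factorial (m - 1))

noncomputable def network (d m K : ℕ) (v : Fin K → ℝ) (w : Fin K → EuclideanSpace ℝ (Fin d))
    (b : Fin K → ℝ) (c : MvPolynomial (Fin d) ℝ) : EuclideanSpace ℝ (Fin d) → ℝ :=
  fun x => (∑ k, v k * truncPow m (⟪w k, x⟫_ℝ - b k)) + MvPolynomial.eval x c

theorem truncPow_mul_of_nonneg (m : ℕ) {l : ℝ} (hl : 0 ≤ l) (t : ℝ) :
    truncPow m (l * t) = l ^ (m - 1) * truncPow m t := by
  have hmax : max 0 (l * t) = l * max 0 t := by rw [mul_max_of_nonneg _ _ hl, mul_zero]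
  rw [truncPow, truncPow, hmax, mul_pow, mul_div_assoc]

theorem exists_pos_div_pow_eq_mul_pow {a n : ℝ} (ha : 0 < a) (hn : 0 < n) {p : ℕ}
    (hp : p ≠ 0) : ∃ l : ℝ, 0 < l ∧ a / l ^ p = (l * n) ^ p := by
  set l := (a / n ^ p) ^ (((2 * p : ℕ) : ℝ)⁻¹) with hl
  have hl_pos : 0 < l := by positivity
  have hl_pow : l ^ p * l ^ p = a / n ^ p := by
    rw [← pow_add, ← two_mul, hl, Real.rpow_inv_natCast_pow (by positivity) (by omega)]
  have hlp : l ^ p ≠ 0 := by positivity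
  have hnp : n ^ p ≠ 0 := by positivity
  refine ⟨l, hl_pos, ?_⟩
  rw [mul_pow, div_eq_iff hlp, mul_assoc, mul_comm (n ^ p), ← mul_assoc, hl_pow,
    div_mul_cancel₀ _ hnp]

section Neuron

variable {E : Type*} [NormedAddCommGroup E] [InnerProductSpace ℝ E] {m : ℕ}

theorem exists_balanced_neuron (hm : 2 ≤ m) (v : ℝ) (w : E) (b : ℝ) :
    ∃ (v' : ℝ) (w' : E) (b' e : ℝ),
      (∀ x, v' * truncPow m (⟪w', x⟫_ℝ - b') + e = v * truncPow m (⟪w, x⟫_ℝ - b)) ∧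
      |v'| = ‖w'‖ ^ (m - 1) ∧ |v'| * ‖w'‖ ^ (m - 1) = |v| * ‖w‖ ^ (m - 1) := by
  have hp : m - 1 ≠ 0 := by omega
  rcases eq_or_ne w 0 with rfl | hw
  · exact ⟨0, 0, 0, v * truncPow m (-b), fun x => by simp, by simp [zero_pow hp],
      by simp [zero_pow hp]⟩
  rcases eq_or_ne v 0 with rfl | hv
  · exact ⟨0, 0, 0, 0, fun x => by simp, by simp [zero_pow hp], by simp⟩
  obtain ⟨l, hl, hbal⟩ :=
    exists_pos_div_pow_eq_mul_pow (abs_pos.mpr hv) (norm_pos_iff.mpr hw) hp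
  have hlp : l ^ (m - 1) ≠ 0 := by positivity
  refine ⟨v / l ^ (m - 1), l • w, l * b, 0, fun x => ?_, ?_, ?_⟩
  · rw [real_inner_smul_left, ← mul_sub, truncPow_mul_of_nonneg m hl.le, add_zero,
      ← mul_assoc, div_mul_cancel₀ _ hlp]
  · rw [abs_div, abs_of_pos (pow_pos hl _), norm_smul, Real.norm_of_nonneg hl.le, hbal]
  · rw [abs_div, abs_of_pos (pow_pos hl _), norm_smul, Real.norm_of_nonneg hl.le, mul_pow]
    field_simp

end Neuron

section Regularizers

variable {ι E : Type*} [Fintype ι] [SeminormedAddCommGroup E]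

def pathNorm (m : ℕ) (v : ι → ℝ) (w : ι → E) : ℝ :=
  ∑ k, |v k| * ‖w k‖ ^ (m - 1)

noncomputable def weightDecay (m : ℕ) (v : ι → ℝ) (w : ι → E) : ℝ :=
  (1 / 2 : ℝ) * ∑ k, (|v k| ^ 2 + ‖w k‖ ^ (2 * m - 2))

theorem weightDecay_eq_sum (m : ℕ) (v : ι → ℝ) (w : ι → E) :
    weightDecay m v w = ∑ k, (|v k| ^ 2 + (‖w k‖ ^ (m - 1)) ^ 2) / 2 := by
  rw [weightDecay, Finset.mul_sum]
  refine Finset.sum_congr rfl fun k _ => ?_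
  rw [← pow_mul, show (m - 1) * 2 = 2 * m - 2 by omega]
  ring

theorem mul_le_add_sq_div_two (a b : ℝ) : a * b ≤ (a ^ 2 + b ^ 2) / 2 := by
  linarith [two_mul_le_add_sq a b]

theorem mul_eq_add_sq_div_two_iff {a b : ℝ} : a * b = (a ^ 2 + b ^ 2) / 2 ↔ a = b := by
  refine ⟨fun h => ?_, fun h => by rw [h]; ring⟩
  have hsq : (a - b) ^ 2 = 0 := by linarith
  exact sub_eq_zero.mp (pow_eq_zero_iff two_ne_zero |>.mp hsq)

theorem pathNorm_le_weightDecay (m : ℕ) (v : ι → ℝ) (w : ι → E) :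
    pathNorm m v w ≤ weightDecay m v w := by
  rw [weightDecay_eq_sum]
  exact Finset.sum_le_sum fun k _ => mul_le_add_sq_div_two _ _

theorem weightDecay_eq_pathNorm_iff (m : ℕ) (v : ι → ℝ) (w : ι → E) :
    weightDecay m v w = pathNorm m v w ↔ ∀ k, |v k| = ‖w k‖ ^ (m - 1) := by
  rw [weightDecay_eq_sum, eq_comm, pathNorm,
    Finset.sum_eq_sum_iff_of_le fun k _ => mul_le_add_sq_div_two _ _]
  simp only [Finset.mem_univ, true_implies, mul_eq_add_sq_div_two_iff]

end Regularizers

theorem exists_network_eq_weightDecay_eq_pathNorm {d m K : ℕ} (hm : 2 ≤ m)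
    (v : Fin K → ℝ) (w : Fin K → EuclideanSpace ℝ (Fin d)) (b : Fin K → ℝ)
    {c : MvPolynomial (Fin d) ℝ} (hc : c.totalDegree < m) :
    ∃ (v' : Fin K → ℝ) (w' : Fin K → EuclideanSpace ℝ (Fin d)) (b' : Fin K → ℝ)
      (c' : MvPolynomial (Fin d) ℝ), c'.totalDegree < m ∧
      network d m K v' w' b' c' = network d m K v w b c ∧
      weightDecay m v' w' = pathNorm m v w := by
  choose v' w' b' e hneuron hbal hpath using
    fun k => exists_balanced_neuron (m := m) hm (v k) (w k) (b k)
  refine ⟨v', w', b', c + MvPolynomial.C (∑ k, e k), ?_, ?_, ?_⟩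
  · refine (MvPolynomial.totalDegree_add _ _).trans_lt ?_
    rw [MvPolynomial.totalDegree_C]
    exact max_lt hc (by omega)
  · funext x
    simp only [network, map_add, MvPolynomial.eval_C, ← hneuron, Finset.sum_add_distrib]
    ring
  · rw [(weightDecay_eq_pathNorm_iff m v' w').mpr hbal]
    exact Finset.sum_congr rfl fun k _ => hpath k

theorem weight_decay_minimizers_are_path_norm_minimizers_general (d m K : ℕ)
    (hm : 2 ≤ m)
    (J : (EuclideanSpace ℝ (Fin d) → ℝ) → ℝ)
    (vs : Fin K → ℝ) (ws : Fin K → EuclideanSpace ℝ (Fin d)) (bs : Fin K → ℝ)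
    (cs : MvPolynomial (Fin d) ℝ) (hcs : cs.totalDegree < m)
    (hmin : ∀ (v : Fin K → ℝ) (w : Fin K → EuclideanSpace ℝ (Fin d)) (b : Fin K → ℝ)
      (c : MvPolynomial (Fin d) ℝ), c.totalDegree < m →
      J (network d m K vs ws bs cs) + (1 / 2 : ℝ) * (∑ k, (|vs k| ^ 2 + ‖ws k‖ ^ (2 * m - 2)))
        ≤ J (network d m K v w b c) + (1 / 2 : ℝ) * (∑ k, (|v k| ^ 2 + ‖w k‖ ^ (2 * m - 2)))) :
    (∀ k, |vs k| = ‖ws k‖ ^ (m - 1)) ∧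
    (∀ (v : Fin K → ℝ) (w : Fin K → EuclideanSpace ℝ (Fin d)) (b : Fin K → ℝ)
      (c : MvPolynomial (Fin d) ℝ), c.totalDegree < m →
      J (network d m K vs ws bs cs) + (∑ k, |vs k| * ‖ws k‖ ^ (m - 1))
        ≤ J (network d m K v w b c) + (∑ k, |v k| * ‖w k‖ ^ (m - 1))) := by
  have hmin_pathNorm : ∀ (v : Fin K → ℝ) (w : Fin K → EuclideanSpace ℝ (Fin d))
      (b : Fin K → ℝ) (c : MvPolynomial (Fin d) ℝ), c.totalDegree < m →
      J (network d m K vs ws bs cs) + weightDecay m vs ws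
        ≤ J (network d m K v w b c) + pathNorm m v w := by
    intro v w b c hc
    obtain ⟨v', w', b', c', hc', hnet, hreg⟩ :=
      exists_network_eq_weightDecay_eq_pathNorm hm v w b hc
    rw [← hnet, ← hreg]
    exact hmin v' w' b' c' hc'
  have hbalanced : weightDecay m vs ws = pathNorm m vs ws :=
    le_antisymm (by linarith [hmin_pathNorm vs ws bs cs hcs]) (pathNorm_le_weightDecay m vs ws)
  refine ⟨(weightDecay_eq_pathNorm_iff m vs ws).mp hbalanced, fun v w b c hc => ?_⟩
  rw [hbalanced] at hmin_pathNorm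
  exact hmin_pathNorm v w b c hc

theorem weight_decay_minimizers_are_path_norm_minimizers (d m K : ℕ)
    (hd : 1 ≤ d) (hm : 2 ≤ m)
    (J : (EuclideanSpace ℝ (Fin d) → ℝ) → ℝ)
    (vs : Fin K → ℝ) (ws : Fin K → EuclideanSpace ℝ (Fin d)) (bs : Fin K → ℝ)
    (cs : MvPolynomial (Fin d) ℝ) (hcs : cs.totalDegree < m)
    (hmin : ∀ (v : Fin K → ℝ) (w : Fin K → EuclideanSpace ℝ (Fin d)) (b : Fin K → ℝ)
      (c : MvPolynomial (Fin d) ℝ), c.totalDegree < m →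
      J (network d m K vs ws bs cs) + (1 / 2 : ℝ) * (∑ k, (|vs k| ^ 2 + ‖ws k‖ ^ (2 * m - 2)))
        ≤ J (network d m K v w b c) + (1 / 2 : ℝ) * (∑ k, (|v k| ^ 2 + ‖w k‖ ^ (2 * m - 2)))) :
    (∀ k, |vs k| = ‖ws k‖ ^ (m - 1)) ∧
    (∀ (v : Fin K → ℝ) (w : Fin K → EuclideanSpace ℝ (Fin d)) (b : Fin K → ℝ)
      (c : MvPolynomial (Fin d) ℝ), c.totalDegree < m →
      J (network d m K vs ws bs cs) + (∑ k, |vs k| * ‖ws k‖ ^ (m - 1))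
        ≤ J (network d m K v w b c) + (∑ k, |v k| * ‖w k‖ ^ (m - 1))) :=
  weight_decay_minimizers_are_path_norm_minimizers_general d m K hm J vs ws bs cs hcs hmin
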